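/- The subspace F̃ satisfies: (1) F̃ = (F̃ ∩ V₁) ⊕ (F̃ ∩ V₂); (2) F̃ = (F̃ ∩ W₁) ⊕ (F̃ ∩ W₂); (3) for all i, j ∈ {1,2}, F̃ = (F̃ ∩ V_i) ⊕ (F̃ ∩ W_j). -/

import Mathlib

/-!
The sequence `F̃(n)` decreases, so by finite dimensionality it stabilises, and then its limit
satisfies `F̃ = (F̃ ∩ Vᵢ) + (F̃ ∩ Wⱼ)` for all `i, j`. The sums `(F̃ ∩ V₀) + (F̃ ∩ V₁)` and
`(F̃ ∩ W₀) + (F̃ ∩ W₁)` are direct and contained in `F̃`; adding the dimension formulas for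
`(F̃ ∩ V₀) + (F̃ ∩ W₀) = F̃` and `(F̃ ∩ V₁) + (F̃ ∩ W₁) = F̃` then forces every one of these
sums to be direct and equal to `F̃`.
-/

open Submodule

/-- The decreasing sequence of subspaces `F̃(n)`:
`F̃(0) = E`, `F̃(n+1) = ∩_{i,j} ((F̃(n) ∩ Vᵢ) + (F̃(n) ∩ Wⱼ))`. -/
noncomputable def FTilde {K E : Type*} [Field K] [AddCommGroup E] [Module K E]
    (V W : Fin 2 → Submodule K E) : ℕ → Submodule K E
  | 0 => ⊤
  | n + 1 => ⨅ i : Fin 2, ⨅ j : Fin 2, (FTilde V W n ⊓ V i) ⊔ (FTilde V W n ⊓ W j)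

open Module

theorem Submodule.exists_forall_ge_eq_iInf_of_antitone {R M : Type*} [Ring R] [AddCommGroup M]
    [Module R M] [IsArtinian R M] {f : ℕ → Submodule R M} (hf : Antitone f) :
    ∃ N, ∀ n, N ≤ n → f n = ⨅ m, f m := by
  obtain ⟨N, hN⟩ : ∃ N, ∀ n, N ≤ n → f N = f n :=
    IsArtinian.monotone_stabilizes ⟨fun n => OrderDual.toDual (f n), fun _ _ h => hf h⟩
  refine ⟨N, fun n hn => le_antisymm (le_iInf fun m => ?_) (iInf_le _ _)⟩
  rw [← hN n hn]
  rcases le_total m N with h | h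
  · exact hf h
  · exact (hN m h).le

theorem Submodule.disjoint_and_sup_eq_of_sup_eq {K E : Type*} [DivisionRing K] [AddCommGroup E]
    [Module K E] [FiniteDimensional K E] {F A₀ A₁ B₀ B₁ : Submodule K E}
    (hA : Disjoint A₀ A₁) (hB : Disjoint B₀ B₁) (h₀ : A₀ ⊔ B₀ = F) (h₁ : A₁ ⊔ B₁ = F) :
    Disjoint A₀ B₀ ∧ Disjoint A₁ B₁ ∧ A₀ ⊔ A₁ = F ∧ B₀ ⊔ B₁ = F := by
  have hAF : A₀ ⊔ A₁ ≤ F := sup_le (h₀ ▸ le_sup_left) (h₁ ▸ le_sup_left)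
  have hBF : B₀ ⊔ B₁ ≤ F := sup_le (h₀ ▸ le_sup_right) (h₁ ▸ le_sup_right)
  have dA := finrank_sup_add_finrank_inf_eq A₀ A₁
  have dB := finrank_sup_add_finrank_inf_eq B₀ B₁
  have d₀ := finrank_sup_add_finrank_inf_eq A₀ B₀
  have d₁ := finrank_sup_add_finrank_inf_eq A₁ B₁
  rw [disjoint_iff.mp hA, finrank_bot] at dA
  rw [disjoint_iff.mp hB, finrank_bot] at dB
  rw [h₀] at d₀; rw [h₁] at d₁
  have leA := finrank_mono hAF
  have leB := finrank_mono hBF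
  simp only [disjoint_iff, ← finrank_eq_zero (R := K)]
  refine ⟨by omega, by omega, eq_of_le_of_finrank_eq hAF (by omega),
    eq_of_le_of_finrank_eq hBF (by omega)⟩

section FTilde

variable {K E : Type*} [Field K] [AddCommGroup E] [Module K E] (V W : Fin 2 → Submodule K E)

theorem FTilde_succ_le (n : ℕ) (i j : Fin 2) :
    FTilde V W (n + 1) ≤ (FTilde V W n ⊓ V i) ⊔ (FTilde V W n ⊓ W j) :=
  (iInf_le _ i).trans (iInf_le _ j)

theorem FTilde_antitone : Antitone (FTilde V W) :=
  antitone_nat_of_succ_le fun n =>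
    (FTilde_succ_le V W n 0 0).trans (sup_le inf_le_left inf_le_left)

theorem sup_inf_iInf_FTilde_eq [FiniteDimensional K E] (i j : Fin 2) :
    ((⨅ n, FTilde V W n) ⊓ V i) ⊔ ((⨅ n, FTilde V W n) ⊓ W j) = ⨅ n, FTilde V W n := by
  obtain ⟨N, hN⟩ := exists_forall_ge_eq_iInf_of_antitone (FTilde_antitone V W)
  have hle := FTilde_succ_le V W N i j
  rw [hN (N + 1) N.le_succ, hN N le_rfl] at hle
  exact le_antisymm (sup_le inf_le_left inf_le_left) hle

end FTilde

theorem stmt3_general {K E : Type*} [Field K] [AddCommGroup E] [Module K E]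
    [FiniteDimensional K E]
    (V W : Fin 2 → Submodule K E)
    (hV : IsCompl (V 0) (V 1)) (hW : IsCompl (W 0) (W 1))
    (Ft : Submodule K E) (hFt : Ft = ⨅ n : ℕ, FTilde V W n) :
    (Disjoint (Ft ⊓ V 0) (Ft ⊓ V 1) ∧ (Ft ⊓ V 0) ⊔ (Ft ⊓ V 1) = Ft) ∧
    (Disjoint (Ft ⊓ W 0) (Ft ⊓ W 1) ∧ (Ft ⊓ W 0) ⊔ (Ft ⊓ W 1) = Ft) ∧
    (∀ i j : Fin 2, Disjoint (Ft ⊓ V i) (Ft ⊓ W j) ∧ (Ft ⊓ V i) ⊔ (Ft ⊓ W j) = Ft) := by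
  have hsup : ∀ i j, (Ft ⊓ V i) ⊔ (Ft ⊓ W j) = Ft := hFt ▸ sup_inf_iInf_FTilde_eq V W
  have hVdisj : Disjoint (Ft ⊓ V 0) (Ft ⊓ V 1) := hV.disjoint.mono inf_le_right inf_le_right
  have hWdisj : Disjoint (Ft ⊓ W 0) (Ft ⊓ W 1) := hW.disjoint.mono inf_le_right inf_le_right
  obtain ⟨h₀₀, h₁₁, hVsup, hWsup⟩ :=
    disjoint_and_sup_eq_of_sup_eq hVdisj hWdisj (hsup 0 0) (hsup 1 1)
  obtain ⟨h₀₁, h₁₀, -, -⟩ :=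
    disjoint_and_sup_eq_of_sup_eq hVdisj hWdisj.symm (hsup 0 1) (hsup 1 0)
  refine ⟨⟨hVdisj, hVsup⟩, ⟨hWdisj, hWsup⟩, fun i j => ⟨?_, hsup i j⟩⟩
  fin_cases i <;> fin_cases j <;> assumption

/-- `F̃ = (F̃ ∩ V₁) ⊕ (F̃ ∩ V₂) = (F̃ ∩ W₁) ⊕ (F̃ ∩ W₂) = (F̃ ∩ Vᵢ) ⊕ (F̃ ∩ Wⱼ)`. -/
theorem stmt3 {K E : Type*} [Field K] [AddCommGroup E] [Module K E]
    [FiniteDimensional K E] (hchar : (2 : K) ≠ 0)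
    (V W : Fin 2 → Submodule K E)
    (hV : IsCompl (V 0) (V 1)) (hW : IsCompl (W 0) (W 1))
    (Ft : Submodule K E) (hFt : Ft = ⨅ n : ℕ, FTilde V W n) :
    (Disjoint (Ft ⊓ V 0) (Ft ⊓ V 1) ∧ (Ft ⊓ V 0) ⊔ (Ft ⊓ V 1) = Ft) ∧
    (Disjoint (Ft ⊓ W 0) (Ft ⊓ W 1) ∧ (Ft ⊓ W 0) ⊔ (Ft ⊓ W 1) = Ft) ∧
    (∀ i j : Fin 2, Disjoint (Ft ⊓ V i) (Ft ⊓ W j) ∧ (Ft ⊓ V i) ⊔ (Ft ⊓ W j) = Ft) :=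
  stmt3_general V W hV hW Ft hFt
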